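/- arXiv:1507.01431 — 8 statements merged into one kernel-verified Lean document; each statement's English description precedes it below -/
import Mathlib

section
/- For every 2-homogeneous polynomial P(x,y) = a·x² + b·xy + c·y² with real coefficients, max{|a|, |b|, |c|} ≤ ‖P‖_∞, where ‖P‖_∞ = sup{|P(x,y)| : |x| ≤ 1, |y| ≤ 1}. The constant 1 is sharp (attained by P(x,y) = x²). -/
/-- Sup norm of `a·x² + b·xy + c·y²` over the unit ball of `ℓ∞²`. -/
noncomputable def supNormInf (a b c : ℝ) : ℝ :=
  sSup {z : ℝ | ∃ x y : ℝ, |x| ≤ 1 ∧ |y| ≤ 1 ∧ z = |a * x ^ 2 + b * x * y + c * y ^ 2|}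

lemma abs_quadForm_le_sum_abs_coeff {a b c x y : ℝ} (hx : |x| ≤ 1) (hy : |y| ≤ 1) :
    |a * x ^ 2 + b * x * y + c * y ^ 2| ≤ |a| + |b| + |c| := by
  have hx2 : |x| ^ 2 ≤ 1 := pow_le_one₀ (abs_nonneg x) hx
  have hy2 : |y| ^ 2 ≤ 1 := pow_le_one₀ (abs_nonneg y) hy
  have hxy : |x| * |y| ≤ 1 := mul_le_one₀ hx (abs_nonneg y) hy
  calc |a * x ^ 2 + b * x * y + c * y ^ 2|
      ≤ |a| * |x| ^ 2 + |b| * (|x| * |y|) + |c| * |y| ^ 2 := by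
        simp only [← abs_pow, ← abs_mul, ← mul_assoc]
        exact abs_add_three _ _ _
    _ ≤ |a| * 1 + |b| * 1 + |c| * 1 := by gcongr
    _ = |a| + |b| + |c| := by ring

lemma bddAbove_abs_quadForm (a b c : ℝ) :
    BddAbove {z : ℝ | ∃ x y : ℝ, |x| ≤ 1 ∧ |y| ≤ 1 ∧ z = |a * x ^ 2 + b * x * y + c * y ^ 2|} := by
  refine ⟨|a| + |b| + |c|, ?_⟩
  rintro z ⟨x, y, hx, hy, rfl⟩
  exact abs_quadForm_le_sum_abs_coeff hx hy

lemma abs_quadForm_le_supNormInf (a b c : ℝ) {x y : ℝ} (hx : |x| ≤ 1) (hy : |y| ≤ 1) :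
    |a * x ^ 2 + b * x * y + c * y ^ 2| ≤ supNormInf a b c :=
  le_csSup (bddAbove_abs_quadForm a b c) ⟨x, y, hx, hy, rfl⟩

lemma abs_a_le_supNormInf (a b c : ℝ) : |a| ≤ supNormInf a b c := by
  simpa using abs_quadForm_le_supNormInf a b c (x := 1) (y := 0) (by norm_num) (by norm_num)

lemma abs_c_le_supNormInf (a b c : ℝ) : |c| ≤ supNormInf a b c := by
  simpa using abs_quadForm_le_supNormInf a b c (x := 0) (y := 1) (by norm_num) (by norm_num)

/-- `2b = P(1,1) - P(1,-1)`. -/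
lemma abs_b_le_supNormInf (a b c : ℝ) : |b| ≤ supNormInf a b c := by
  have hplus : |a + b + c| ≤ supNormInf a b c := by
    simpa using abs_quadForm_le_supNormInf a b c (x := 1) (y := 1) (by norm_num) (by norm_num)
  have hminus : |a - b + c| ≤ supNormInf a b c := by
    simpa [sub_eq_add_neg] using
      abs_quadForm_le_supNormInf a b c (x := 1) (y := -1) (by norm_num) (by norm_num)
  have htwo : 2 * |b| ≤ |a + b + c| + |a - b + c| := by
    calc 2 * |b| = |(a + b + c) - (a - b + c)| := by
          rw [show (a + b + c) - (a - b + c) = 2 * b by ring, abs_mul, abs_two]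
      _ ≤ |a + b + c| + |a - b + c| := abs_sub _ _
  linarith

lemma max_abs_coeff_le_supNormInf (a b c : ℝ) :
    max (max |a| |b|) |c| ≤ supNormInf a b c :=
  max_le (max_le (abs_a_le_supNormInf a b c) (abs_b_le_supNormInf a b c))
    (abs_c_le_supNormInf a b c)

lemma supNormInf_one_zero_zero : supNormInf 1 0 0 = 1 := by
  refine le_antisymm ?_ (by simpa using abs_a_le_supNormInf 1 0 0)
  refine csSup_le ⟨1, 1, 0, by norm_num⟩ ?_
  rintro z ⟨x, y, hx, _, rfl⟩
  simpa using hx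

theorem stmt1 :
    (∀ a b c : ℝ, max (max |a| |b|) |c| ≤ supNormInf a b c) ∧
    max (max |(1 : ℝ)| |(0 : ℝ)|) |(0 : ℝ)| = supNormInf 1 0 0 := by
  refine ⟨max_abs_coeff_le_supNormInf, ?_⟩
  rw [supNormInf_one_zero_zero]
  simp
end

section
/- For every 2-homogeneous polynomial P(x,y) = a·x² + b·xy + c·y² with real coefficients, |a| + |b| + |c| ≤ (2 + 2√2) · ‖P‖_1, where ‖P‖_1 = sup{|P(x,y)| : |x| + |y| ≤ 1}. The constant 2 + 2√2 is optimal, attained by P(x,y) = (√2/2)(x² − y²) + (2 + √2)xy. -/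
/-!
Write `P(x,y) = a x² + b xy + c y²` and `M = ‖P‖₁`. Up to a global sign, `|a| + |b| + |c|` is one
of `|a ± b + c|` and `|a ± b - c|`. The first two are `4 |P(1/2, ±1/2)| ≤ 4M`. For the other two,
with `u = √2/2` and `v = 1 - √2/2` (so `u + v = 1`, `u² - v² = 2uv = √2 - 1`),
`a + b - c = (1 + √2) (P(u, v) - P(v, -u))`, which is at most `(2 + 2√2) M`.
For the extremal polynomial, `(|x| + |y|)² ∓ P(x,y)` is, up to a positive factor, a perfect square
when `xy` has the appropriate sign, and trivially nonnegative otherwise; so `‖P‖₁ ≤ 1`, and the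
reverse inequality is the general bound.
-/

/-- Sup norm of `a·x² + b·xy + c·y²` over the unit ball of `ℓ₁²`. -/
noncomputable def supNormOne (a b c : ℝ) : ℝ :=
  sSup {z : ℝ | ∃ x y : ℝ, |x| + |y| ≤ 1 ∧ z = |a * x ^ 2 + b * x * y + c * y ^ 2|}

open Real

def quadForm (a b c x y : ℝ) : ℝ := a * x ^ 2 + b * x * y + c * y ^ 2

lemma quadForm_neg_right (a b c x y : ℝ) : quadForm a b c x (-y) = quadForm a (-b) c x y := by
  unfold quadForm; ring

lemma abs_add_abs_add_abs_le {a b c K : ℝ} (h₁ : |a + b + c| ≤ K) (h₂ : |a - b + c| ≤ K)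
    (h₃ : |a + b - c| ≤ K) (h₄ : |a - b - c| ≤ K) : |a| + |b| + |c| ≤ K := by
  rw [abs_le] at h₁ h₂ h₃ h₄
  rcases abs_cases a with ⟨ha, _⟩ | ⟨ha, _⟩ <;> rcases abs_cases b with ⟨hb, _⟩ | ⟨hb, _⟩ <;>
    rcases abs_cases c with ⟨hc, _⟩ | ⟨hc, _⟩ <;> rw [ha, hb, hc] <;> linarith

section supNormOne

variable {a b c x y M : ℝ}

lemma abs_quadForm_le_of_abs_add_abs_le_one (h : |x| + |y| ≤ 1) :
    |quadForm a b c x y| ≤ |a| + |b| + |c| := by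
  have hx : |x| ≤ 1 := by linarith [abs_nonneg y]
  have hy : |y| ≤ 1 := by linarith [abs_nonneg x]
  have hxx : |x| ^ 2 ≤ 1 := pow_le_one₀ (abs_nonneg x) hx
  have hxy : |x| * |y| ≤ 1 := mul_le_one₀ hx (abs_nonneg y) hy
  have hyy : |y| ^ 2 ≤ 1 := pow_le_one₀ (abs_nonneg y) hy
  calc |quadForm a b c x y| ≤ |a * x ^ 2| + |b * x * y| + |c * y ^ 2| := abs_add_three _ _ _
    _ = |a| * |x| ^ 2 + |b| * (|x| * |y|) + |c| * |y| ^ 2 := by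
      simp only [abs_mul, abs_pow, mul_assoc]
    _ ≤ |a| * 1 + |b| * 1 + |c| * 1 := by gcongr
    _ = |a| + |b| + |c| := by ring

lemma bddAbove_abs_quadForm_ball (a b c : ℝ) :
    BddAbove {z : ℝ | ∃ x y : ℝ, |x| + |y| ≤ 1 ∧ z = |quadForm a b c x y|} := by
  refine ⟨|a| + |b| + |c|, ?_⟩
  rintro z ⟨x, y, h, rfl⟩
  exact abs_quadForm_le_of_abs_add_abs_le_one h

lemma abs_quadForm_le_supNormOne (h : |x| + |y| ≤ 1) : |quadForm a b c x y| ≤ supNormOne a b c :=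
  le_csSup (bddAbove_abs_quadForm_ball a b c) ⟨x, y, h, rfl⟩

lemma supNormOne_nonneg (a b c : ℝ) : 0 ≤ supNormOne a b c :=
  (abs_nonneg _).trans (abs_quadForm_le_supNormOne (x := 0) (y := 0) (by norm_num))

lemma supNormOne_le (hM : ∀ x y, |x| + |y| ≤ 1 → |quadForm a b c x y| ≤ M) :
    supNormOne a b c ≤ M := by
  refine csSup_le ⟨_, 0, 0, by norm_num, rfl⟩ ?_
  rintro z ⟨x, y, h, rfl⟩
  exact hM x y h

end supNormOne

section BallBound

variable {a b c M : ℝ} (hM : ∀ x y, |x| + |y| ≤ 1 → |quadForm a b c x y| ≤ M)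
include hM

lemma abs_add_add_le_of_ball_bound : |a + b + c| ≤ 4 * M := by
  have h := hM (1 / 2) (1 / 2) (by norm_num [abs_of_pos])
  have e : a + b + c = 4 * quadForm a b c (1 / 2) (1 / 2) := by unfold quadForm; ring
  rw [e, abs_mul, abs_of_pos four_pos]
  linarith

lemma abs_add_sub_le_of_ball_bound : |a + b - c| ≤ (2 + 2 * √2) * M := by
  have hsq : √2 ^ 2 = 2 := sq_sqrt zero_le_two
  have hle : √2 ≤ 2 := by nlinarith [sqrt_nonneg 2]
  set u := √2 / 2
  set v := 1 - √2 / 2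
  have hu : 0 ≤ u := by positivity
  have hv : 0 ≤ v := by simp only [v]; linarith
  have huv := hM u v (by rw [abs_of_nonneg hu, abs_of_nonneg hv]; linarith)
  have hvu := hM v (-u) (by rw [abs_of_nonneg hv, abs_neg, abs_of_nonneg hu]; linarith)
  have e : a + b - c = (1 + √2) * (quadForm a b c u v - quadForm a b c v (-u)) := by
    unfold quadForm; linear_combination (c - a + (√2 - 1) * b / 2) * hsq
  calc |a + b - c| ≤ (1 + √2) * (|quadForm a b c u v| + |quadForm a b c v (-u)|) := by
        rw [e, abs_mul, abs_of_pos (by positivity)]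
        gcongr
        exact abs_sub _ _
    _ ≤ (1 + √2) * (M + M) := by gcongr
    _ = (2 + 2 * √2) * M := by ring

end BallBound

theorem abs_add_abs_add_abs_le_supNormOne (a b c : ℝ) :
    |a| + |b| + |c| ≤ (2 + 2 * √2) * supNormOne a b c := by
  set M := supNormOne a b c
  have hM : ∀ x y, |x| + |y| ≤ 1 → |quadForm a b c x y| ≤ M :=
    fun _ _ h ↦ abs_quadForm_le_supNormOne h
  have hM' : ∀ x y, |x| + |y| ≤ 1 → |quadForm a (-b) c x y| ≤ M := fun x y h ↦ by
    rw [← quadForm_neg_right]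
    exact hM x (-y) (by rwa [abs_neg])
  have h4 : 4 * M ≤ (2 + 2 * √2) * M := by
    have : 1 ≤ √2 := one_le_sqrt.mpr one_le_two
    gcongr
    · exact supNormOne_nonneg a b c
    · linarith
  apply abs_add_abs_add_abs_le
  · exact (abs_add_add_le_of_ball_bound hM).trans h4
  · exact (abs_add_add_le_of_ball_bound hM').trans h4
  · exact abs_add_sub_le_of_ball_bound hM
  · exact abs_add_sub_le_of_ball_bound hM'

lemma abs_quadForm_extremal_le (x y : ℝ) :
    |quadForm (√2 / 2) (2 + √2) (-(√2 / 2)) x y| ≤ (|x| + |y|) ^ 2 := by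
  have hsq : √2 ^ 2 = 2 := sq_sqrt zero_le_two
  have hle : √2 < 2 := by nlinarith [sqrt_nonneg 2]
  have hnorm : (|x| + |y|) ^ 2 = x ^ 2 + y ^ 2 + 2 * |x * y| := by
    rw [abs_mul]; ring_nf; simp only [sq_abs]
  have hup : (4 - 2 * √2) * (x ^ 2 + y ^ 2 + 2 * (x * y)
      - quadForm (√2 / 2) (2 + √2) (-(√2 / 2)) x y) = ((2 - √2) * x - √2 * y) ^ 2 := by
    unfold quadForm; linear_combination (-2 * y ^ 2) * hsq
  have hlow : (4 - 2 * √2) * (x ^ 2 + y ^ 2 - 2 * (x * y)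
      + quadForm (√2 / 2) (2 + √2) (-(√2 / 2)) x y) = ((2 - √2) * y + √2 * x) ^ 2 := by
    unfold quadForm; linear_combination (-2 * x ^ 2) * hsq
  have hpos : 0 < 4 - 2 * √2 := by linarith
  rw [hnorm, abs_le]
  rcases abs_cases (x * y) with ⟨habs, hsign⟩ | ⟨habs, hsign⟩ <;> rw [habs] <;> constructor
  · unfold quadForm; nlinarith
  · nlinarith [sq_nonneg ((2 - √2) * x - √2 * y)]
  · nlinarith [sq_nonneg ((2 - √2) * y + √2 * x)]
  · unfold quadForm; nlinarith

lemma supNormOne_extremal_le_one : supNormOne (√2 / 2) (2 + √2) (-(√2 / 2)) ≤ 1 := by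
  refine supNormOne_le fun x y h ↦ (abs_quadForm_extremal_le x y).trans ?_
  nlinarith [abs_nonneg x, abs_nonneg y]

theorem stmt5 :
    (∀ a b c : ℝ, |a| + |b| + |c| ≤ (2 + 2 * Real.sqrt 2) * supNormOne a b c) ∧
    |(Real.sqrt 2 / 2)| + |(2 + Real.sqrt 2)| + |(-(Real.sqrt 2 / 2))| =
      (2 + 2 * Real.sqrt 2) *
        supNormOne (Real.sqrt 2 / 2) (2 + Real.sqrt 2) (-(Real.sqrt 2 / 2)) := by
  refine ⟨abs_add_abs_add_abs_le_supNormOne,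
    le_antisymm (abs_add_abs_add_abs_le_supNormOne _ _ _) ?_⟩
  have h : 0 ≤ √2 := sqrt_nonneg 2
  rw [abs_neg, abs_of_nonneg (by positivity : 0 ≤ √2 / 2),
    abs_of_nonneg (by positivity : 0 ≤ 2 + √2)]
  nlinarith [supNormOne_extremal_le_one]
end

section
/- For every α, β ≥ 0 with α⁴ + β⁴ = 1, the 2-homogeneous polynomial P(x,y) = ((α⁴−β⁴)/(α²+β²))(x²−y²) + 2αβ((α²+β²)/(α²+β²))xy satisfies |P|_2 = √2 · ‖P‖_4, where |P|_2 is the ℓ2 norm of its three coefficients and ‖P‖_4 = sup{|P(x,y)| : |x|⁴ + |y|⁴ ≤ 1}. In particular ‖P‖_4 = 1 and |P|_2 = √2 for every such α, β. -/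
/-- Sup norm of `a·x² + b·xy + c·y²` over the unit ball of `ℓ₄²`. -/
noncomputable def supNormFour (a b c : ℝ) : ℝ :=
  sSup {z : ℝ | ∃ x y : ℝ, |x| ^ 4 + |y| ^ 4 ≤ 1 ∧ z = |a * x ^ 2 + b * x * y + c * y ^ 2|}

theorem stmt11 (α β : ℝ) (hα : 0 ≤ α) (hβ : 0 ≤ β) (h : α ^ 4 + β ^ 4 = 1) :
    let a : ℝ := (α ^ 4 - β ^ 4) / (α ^ 2 + β ^ 2)
    let b : ℝ := 2 * α * β * ((α ^ 2 + β ^ 2) / (α ^ 2 + β ^ 2))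
    supNormFour a b (-a) = 1 ∧
    Real.sqrt (a ^ 2 + b ^ 2 + (-a) ^ 2) = Real.sqrt 2 * supNormFour a b (-a) := by
  intro a b
  have hpos : 0 < α ^ 2 + β ^ 2 := by nlinarith [sq_nonneg α, sq_nonneg β, sq_nonneg (α^2 - β^2)]
  have ha : a = α ^ 2 - β ^ 2 := by
    show (α ^ 4 - β ^ 4) / (α ^ 2 + β ^ 2) = _
    field_simp; ring
  have hb : b = 2 * α * β := by
    show 2 * α * β * ((α ^ 2 + β ^ 2) / (α ^ 2 + β ^ 2)) = _
    rw [div_self hpos.ne']; ring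
  -- the set
  set S := {z : ℝ | ∃ x y : ℝ, |x| ^ 4 + |y| ^ 4 ≤ 1 ∧ z = |a * x ^ 2 + b * x * y + (-a) * y ^ 2|}
    with hS
  have hub : ∀ z ∈ S, z ≤ 1 := by
    rintro z ⟨x, y, hxy, rfl⟩
    have hx4 : |x| ^ 4 = x ^ 4 := by rw [← abs_pow, abs_of_nonneg (by positivity)]
    have hy4 : |y| ^ 4 = y ^ 4 := by rw [← abs_pow, abs_of_nonneg (by positivity)]
    rw [hx4, hy4] at hxy
    rw [ha, hb, abs_le]
    constructor <;>
      nlinarith [sq_nonneg ((α^2 - β^2)*x*y - α*β*(x^2 - y^2)),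
        sq_nonneg ((α^2 - β^2)*(x^2 - y^2) + 2*α*β*x*y), sq_nonneg (x^2 - y^2),
        sq_nonneg ((α^2 - β^2)*(x^2 - y^2) + 2*α*β*x*y + 1),
        sq_nonneg ((α^2 - β^2)*(x^2 - y^2) + 2*α*β*x*y - 1)]
  have hmem : (1 : ℝ) ∈ S := by
    refine ⟨α, β, ?_, ?_⟩
    · rw [abs_of_nonneg hα, abs_of_nonneg hβ, h]
    · rw [ha, hb, show (α ^ 2 - β ^ 2) * α ^ 2 + 2 * α * β * α * β + -(α ^ 2 - β ^ 2) * β ^ 2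
        = α ^ 4 + β ^ 4 by ring, h, abs_one]
  have hsup : supNormFour a b (-a) = 1 := by
    unfold supNormFour
    exact le_antisymm (csSup_le ⟨1, hmem⟩ hub) (le_csSup ⟨1, hub⟩ hmem)
  refine ⟨hsup, ?_⟩
  rw [hsup, mul_one]
  congr 1
  rw [ha, hb]; nlinarith
end

section
/- For every q ≥ 2, the function f_q: [2,4] → ℝ given by f_q(t) = (2^{1−q}(4t − t²)^{q/2} + t^q)^{1/q} attains its maximum on [2,4] at t = 4, with maximum value 4. -/
/-!
Write `a = √(4t - t²)/2`, so that `f_q(t)` is the `ℓ_q` norm of `(a, a, t)`. Since `ℓ_q` norms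
decrease in `q`, `f_q(t) ≤ f_2(t) = √(2t + t²/2) ≤ 4` for `t ≤ 4`, with equality at `t = 4`, where
`a = 0`. In `q`-th powers: with `r = q/2 ≥ 1`, superadditivity of `x ↦ x^r` gives
`2 (a²)^r + (t²)^r ≤ (2a² + t²)^r ≤ 16^r = 4^q`.
-/

open Real

lemma Real.add_rpow_add_rpow_le_rpow_add_add {p a b c : ℝ} (ha : 0 ≤ a) (hb : 0 ≤ b) (hc : 0 ≤ c)
    (hp : 1 ≤ p) : a ^ p + b ^ p + c ^ p ≤ (a + b + c) ^ p :=
  calc a ^ p + b ^ p + c ^ p ≤ (a + b) ^ p + c ^ p := by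
        gcongr; exact add_rpow_le_rpow_add ha hb hp
    _ ≤ (a + b + c) ^ p := add_rpow_le_rpow_add (add_nonneg ha hb) hc hp

lemma Real.two_rpow_one_sub_mul_rpow_half {x : ℝ} (hx : 0 ≤ x) (q : ℝ) :
    (2 : ℝ) ^ (1 - q) * x ^ (q / 2) = 2 * (x / 4) ^ (q / 2) := by
  have h4 : (4 : ℝ) ^ (q / 2) = 2 ^ q := by
    rw [show (4 : ℝ) = 2 ^ (2 : ℝ) by norm_num, ← rpow_mul zero_le_two]
    ring_nf
  rw [div_rpow hx (by norm_num), h4, rpow_sub zero_lt_two, rpow_one]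
  ring

lemma Real.rpow_eq_sq_rpow_half {t : ℝ} (ht : 0 ≤ t) (q : ℝ) : t ^ q = (t ^ 2) ^ (q / 2) := by
  rw [← rpow_natCast, ← rpow_mul ht]
  ring_nf

lemma two_rpow_one_sub_mul_rpow_half_add_rpow_le {q t : ℝ} (hq : 2 ≤ q) (ht0 : 0 ≤ t)
    (ht4 : t ≤ 4) : (2 : ℝ) ^ (1 - q) * (4 * t - t ^ 2) ^ (q / 2) + t ^ q ≤ 4 ^ q := by
  have ha : 0 ≤ (4 * t - t ^ 2) / 4 := by nlinarith
  have hr : 1 ≤ q / 2 := by linarith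
  calc (2 : ℝ) ^ (1 - q) * (4 * t - t ^ 2) ^ (q / 2) + t ^ q
      = ((4 * t - t ^ 2) / 4) ^ (q / 2) + ((4 * t - t ^ 2) / 4) ^ (q / 2) + (t ^ 2) ^ (q / 2) := by
        rw [two_rpow_one_sub_mul_rpow_half (by nlinarith), rpow_eq_sq_rpow_half ht0]
        ring
    _ ≤ ((4 * t - t ^ 2) / 4 + (4 * t - t ^ 2) / 4 + t ^ 2) ^ (q / 2) :=
        add_rpow_add_rpow_le_rpow_add_add ha ha (sq_nonneg t) hr
    _ ≤ (4 ^ 2) ^ (q / 2) := by gcongr; nlinarith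
    _ = 4 ^ q := (rpow_eq_sq_rpow_half zero_le_four q).symm

lemma two_rpow_one_sub_mul_rpow_half_add_rpow_at_four {q : ℝ} (hq : q ≠ 0) :
    ((2 : ℝ) ^ (1 - q) * (4 * 4 - 4 ^ 2 : ℝ) ^ (q / 2) + (4 : ℝ) ^ q) ^ (1 / q) = 4 := by
  rw [show (4 * 4 - 4 ^ 2 : ℝ) = 0 by norm_num, zero_rpow (by positivity), mul_zero, zero_add,
    one_div, rpow_rpow_inv zero_le_four hq]

theorem stmt15 (q : ℝ) (hq : 2 ≤ q) :
    IsGreatest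
      ((fun t : ℝ => ((2 : ℝ) ^ (1 - q) * (4 * t - t ^ 2) ^ (q / 2) + t ^ q) ^ (1 / q)) ''
        Set.Icc 2 4)
      (((2 : ℝ) ^ (1 - q) * (4 * 4 - 4 ^ 2 : ℝ) ^ (q / 2) + (4 : ℝ) ^ q) ^ (1 / q)) ∧
    ((2 : ℝ) ^ (1 - q) * (4 * 4 - 4 ^ 2 : ℝ) ^ (q / 2) + (4 : ℝ) ^ q) ^ (1 / q) = 4 := by
  have hq0 : 0 < q := by linarith
  have hmax := two_rpow_one_sub_mul_rpow_half_add_rpow_at_four hq0.ne'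
  refine ⟨⟨⟨4, by norm_num, rfl⟩, ?_⟩, hmax⟩
  rintro _ ⟨t, ⟨ht2, ht4⟩, rfl⟩
  have ht0 : 0 ≤ t := by linarith
  have hbase : 0 ≤ 4 * t - t ^ 2 := by nlinarith
  rw [hmax]
  calc ((2 : ℝ) ^ (1 - q) * (4 * t - t ^ 2) ^ (q / 2) + t ^ q) ^ (1 / q)
      ≤ ((4 : ℝ) ^ q) ^ (1 / q) := by
        gcongr
        exact two_rpow_one_sub_mul_rpow_half_add_rpow_le hq ht0 ht4
    _ = 4 := by rw [one_div, rpow_rpow_inv zero_le_four hq0.ne']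
end

section
/- For every q ≥ 2, the function g_q: [1/2,1] → ℝ given by g_q(t) = (2t^q + 2^q t^{q/2}(1−t)^{q/2})^{1/q} attains its maximum on [1/2,1] at t = 1, with maximum value 2^{1/q}. -/
/-!
Since `2 ^ q * t ^ (q / 2) * (1 - t) ^ (q / 2) = (4 t (1 - t)) ^ (q / 2)` and both `t` and
`4 t (1 - t)` lie in `[0, 1]`, raising them to the powers `q ≥ 2` and `q / 2 ≥ 1` only makes
them smaller. Hence the expression under the `q`-th root is at most
`2 t ^ 2 + 4 t (1 - t) = 2 - 2 (1 - t) ^ 2 ≤ 2`, with equality at `t = 1`.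
-/

open Real

lemma two_rpow_mul_rpow_mul_rpow {a b : ℝ} (ha : 0 ≤ a) (hb : 0 ≤ b) (q : ℝ) :
    (2 : ℝ) ^ q * a ^ (q / 2) * b ^ (q / 2) = (4 * a * b) ^ (q / 2) := by
  have four_rpow : (4 : ℝ) ^ (q / 2) = 2 ^ q := by
    rw [show (4 : ℝ) = 2 ^ (2 : ℝ) by norm_num, ← rpow_mul zero_le_two]
    ring_nf
  rw [mul_rpow (by positivity) hb, mul_rpow zero_le_four ha, four_rpow]

lemma two_mul_rpow_add_two_rpow_mul_rpow_le_two {q t : ℝ} (hq : 2 ≤ q) (ht₀ : 0 ≤ t)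
    (ht₁ : t ≤ 1) :
    2 * t ^ q + (2 : ℝ) ^ q * t ^ (q / 2) * (1 - t) ^ (q / 2) ≤ 2 := by
  have hx₀ : 0 ≤ 4 * t * (1 - t) := by nlinarith
  have hx₁ : 4 * t * (1 - t) ≤ 1 := by nlinarith [sq_nonneg (2 * t - 1)]
  have h_pow : t ^ q ≤ t ^ 2 := by
    simpa [rpow_two] using rpow_le_rpow_of_exponent_ge' ht₀ ht₁ zero_le_two hq
  have h_mixed : (4 * t * (1 - t)) ^ (q / 2) ≤ 4 * t * (1 - t) :=
    rpow_le_self_of_le_one hx₀ hx₁ (by linarith)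
  rw [two_rpow_mul_rpow_mul_rpow ht₀ (by linarith)]
  nlinarith [sq_nonneg (1 - t)]

theorem stmt16 (q : ℝ) (hq : 2 ≤ q) :
    IsGreatest
      ((fun t : ℝ => (2 * t ^ q + (2 : ℝ) ^ q * t ^ (q / 2) * (1 - t) ^ (q / 2)) ^ (1 / q)) ''
        Set.Icc (1 / 2) 1)
      ((2 * (1 : ℝ) ^ q + (2 : ℝ) ^ q * (1 : ℝ) ^ (q / 2) * (1 - 1 : ℝ) ^ (q / 2)) ^ (1 / q)) ∧
    (2 * (1 : ℝ) ^ q + (2 : ℝ) ^ q * (1 : ℝ) ^ (q / 2) * (1 - 1 : ℝ) ^ (q / 2)) ^ (1 / q) =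
      (2 : ℝ) ^ (1 / q) := by
  have h_value :
      (2 * (1 : ℝ) ^ q + (2 : ℝ) ^ q * (1 : ℝ) ^ (q / 2) * (1 - 1 : ℝ) ^ (q / 2)) ^ (1 / q) =
        (2 : ℝ) ^ (1 / q) := by
    rw [sub_self, zero_rpow (by positivity)]
    simp
  refine ⟨⟨⟨1, by norm_num, rfl⟩, ?_⟩, h_value⟩
  rintro _ ⟨t, ⟨ht₀, ht₁⟩, rfl⟩
  rw [h_value]
  have ht₀' : 0 ≤ t := by linarith
  have h1t : 0 ≤ 1 - t := by linarith
  exact rpow_le_rpow (by positivity)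
    (two_mul_rpow_add_two_rpow_mul_rpow_le_two hq ht₀' ht₁) (by positivity)
end

section
/- For t ∈ [2,4], the 2-homogeneous polynomial P_t(x,y) = (√(4t − t²)/2)(x² − y²) + t·xy satisfies sup{|P_t(x,y)| : |x| + |y| ≤ 1} = 1. -/
lemma supNormOne_eq_of_le_of_eq {a b c M : ℝ}
    (hle : ∀ x y : ℝ, |x| + |y| ≤ 1 → |a * x ^ 2 + b * x * y + c * y ^ 2| ≤ M)
    {x₀ y₀ : ℝ} (h₀ : |x₀| + |y₀| ≤ 1) (heq : |a * x₀ ^ 2 + b * x₀ * y₀ + c * y₀ ^ 2| = M) :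
    supNormOne a b c = M := by
  refine IsGreatest.csSup_eq ⟨⟨x₀, y₀, h₀, heq.symm⟩, ?_⟩
  rintro z ⟨x, y, hxy, rfl⟩
  exact hle x y hxy

section
variable {t q : ℝ}

lemma four_mul_one_sub_eq (hq : q ^ 2 = 4 * t - t ^ 2) (x y : ℝ) :
    4 * t * (1 - (q / 2 * x ^ 2 + t * x * y + -(q / 2) * y ^ 2)) =
      (t * (x - y) - q * (x + y)) ^ 2 + 4 * t * (1 - (x + y) ^ 2) := by
  linear_combination (-(x + y) ^ 2) * hq

lemma le_one_of_sq_add_le_one (ht : 0 < t) (hq : q ^ 2 = 4 * t - t ^ 2) {x y : ℝ}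
    (hxy : (x + y) ^ 2 ≤ 1) :
    q / 2 * x ^ 2 + t * x * y + -(q / 2) * y ^ 2 ≤ 1 := by
  have h := four_mul_one_sub_eq hq x y
  nlinarith [sq_nonneg (t * (x - y) - q * (x + y))]

lemma abs_le_one_of_abs_add_abs_le_one (ht : 0 < t) (hq : q ^ 2 = 4 * t - t ^ 2) {x y : ℝ}
    (hxy : |x| + |y| ≤ 1) :
    |q / 2 * x ^ 2 + t * x * y + -(q / 2) * y ^ 2| ≤ 1 := by
  have hsq : ∀ u v : ℝ, |u| + |v| ≤ 1 → (u + v) ^ 2 ≤ 1 := fun u v huv => by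
    rw [sq_le_one_iff_abs_le_one]
    exact (abs_add_le u v).trans huv
  rw [abs_le]
  constructor
  · have h := le_one_of_sq_add_le_one ht hq (hsq y (-x) (by rwa [abs_neg, add_comm]))
    linarith
  · exact le_one_of_sq_add_le_one ht hq (hsq x y hxy)

lemma eq_one_of_add_eq_one (ht : t ≠ 0) (hq : q ^ 2 = 4 * t - t ^ 2) {x y : ℝ}
    (hsum : x + y = 1) (hdiff : t * (x - y) = q) :
    q / 2 * x ^ 2 + t * x * y + -(q / 2) * y ^ 2 = 1 := by
  have h := four_mul_one_sub_eq hq x y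
  rw [hdiff, hsum] at h
  have h' := mul_left_cancel₀ (by positivity : 4 * t ≠ 0) (h.trans (by ring : _ = 4 * t * 0))
  linarith

end

theorem stmt17 (t : ℝ) (ht : t ∈ Set.Icc (2 : ℝ) 4) :
    supNormOne (Real.sqrt (4 * t - t ^ 2) / 2) t (-(Real.sqrt (4 * t - t ^ 2) / 2)) = 1 := by
  obtain ⟨ht2, ht4⟩ := ht
  have ht0 : 0 < t := by linarith
  set q := Real.sqrt (4 * t - t ^ 2)
  have hq0 : 0 ≤ q := Real.sqrt_nonneg _
  have hq : q ^ 2 = 4 * t - t ^ 2 := Real.sq_sqrt (by nlinarith)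
  have hqt : q ≤ t := by nlinarith
  have hsum : (t + q) / (2 * t) + (t - q) / (2 * t) = 1 := by field_simp; ring
  have hdiff : t * ((t + q) / (2 * t) - (t - q) / (2 * t)) = q := by field_simp; ring
  refine supNormOne_eq_of_le_of_eq (fun x y => abs_le_one_of_abs_add_abs_le_one ht0 hq)
    (x₀ := (t + q) / (2 * t)) (y₀ := (t - q) / (2 * t)) ?_ ?_
  · rw [abs_of_nonneg (by positivity), abs_of_nonneg (div_nonneg (by linarith) (by positivity)),
      hsum]
  · rw [eq_one_of_add_eq_one ht0.ne' hq hsum hdiff, abs_one]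
end

section
/- For t ∈ [1/2, 1], the 2-homogeneous polynomial Q_t(x,y) = t·x² − t·y² + 2√(t(1−t))·xy satisfies sup{|Q_t(x,y)| : |x| ≤ 1, |y| ≤ 1} = 1. -/
theorem supNormInf_eq_of_le_of_eq {a b c M : ℝ}
    (hle : ∀ x y : ℝ, |x| ≤ 1 → |y| ≤ 1 → |a * x ^ 2 + b * x * y + c * y ^ 2| ≤ M)
    {x₀ y₀ : ℝ} (hx₀ : |x₀| ≤ 1) (hy₀ : |y₀| ≤ 1)
    (hM : |a * x₀ ^ 2 + b * x₀ * y₀ + c * y₀ ^ 2| = M) :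
    supNormInf a b c = M := by
  refine IsGreatest.csSup_eq ⟨⟨x₀, y₀, hx₀, hy₀, hM.symm⟩, ?_⟩
  rintro z ⟨x, y, hx, hy, rfl⟩
  exact hle x y hx hy

theorem abs_rotated_form_le_one {u v x y : ℝ} (huv : u ^ 2 + v ^ 2 = 1)
    (hx : |x| ≤ 1) (hy : |y| ≤ 1) :
    |u ^ 2 * x ^ 2 + 2 * u * v * x * y + -u ^ 2 * y ^ 2| ≤ 1 := by
  have hx2 : x ^ 2 ≤ 1 := (sq_le_one_iff_abs_le_one x).mpr hx
  have hy2 : y ^ 2 ≤ 1 := (sq_le_one_iff_abs_le_one y).mpr hy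
  have hupper : u ^ 2 * x ^ 2 + 2 * u * v * x * y + -u ^ 2 * y ^ 2
      = x ^ 2 - (v * x - u * y) ^ 2 := by
    linear_combination x ^ 2 * huv
  have hlower : u ^ 2 * x ^ 2 + 2 * u * v * x * y + -u ^ 2 * y ^ 2
      = (u * x + v * y) ^ 2 - y ^ 2 := by
    linear_combination (-y ^ 2) * huv
  rw [abs_le]
  constructor
  · rw [hlower]; nlinarith [sq_nonneg (u * x + v * y)]
  · rw [hupper]; nlinarith [sq_nonneg (v * x - u * y)]

theorem supNormInf_rotated_form {u v : ℝ} (huv : u ^ 2 + v ^ 2 = 1) (hvu : |v| ≤ |u|) :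
    supNormInf (u ^ 2) (2 * u * v) (-u ^ 2) = 1 := by
  have hu : u ≠ 0 := by
    rintro rfl
    have hv : v = 0 := abs_nonpos_iff.mp (by simpa using hvu)
    simp [hv] at huv
  refine supNormInf_eq_of_le_of_eq (fun x y => abs_rotated_form_le_one huv)
    (x₀ := 1) (y₀ := v / u) (by norm_num) ?_ ?_
  · rw [abs_div]
    exact div_le_one_of_le₀ hvu (abs_nonneg u)
  · have hvalue : u ^ 2 * 1 ^ 2 + 2 * u * v * 1 * (v / u) + -u ^ 2 * (v / u) ^ 2 = 1 := by
      field_simp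
      linear_combination huv
    rw [hvalue, abs_one]

theorem stmt18 (t : ℝ) (ht : t ∈ Set.Icc (1 / 2 : ℝ) 1) :
    supNormInf t (2 * Real.sqrt (t * (1 - t))) (-t) = 1 := by
  obtain ⟨ht₁, ht₂⟩ := ht
  have hu : Real.sqrt t ^ 2 = t := Real.sq_sqrt (by linarith)
  have hv : Real.sqrt (1 - t) ^ 2 = 1 - t := Real.sq_sqrt (by linarith)
  have hvu : |Real.sqrt (1 - t)| ≤ |Real.sqrt t| := by
    rw [abs_of_nonneg (Real.sqrt_nonneg _), abs_of_nonneg (Real.sqrt_nonneg _)]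
    exact Real.sqrt_le_sqrt (by linarith)
  have hb : 2 * Real.sqrt (t * (1 - t)) = 2 * Real.sqrt t * Real.sqrt (1 - t) := by
    rw [Real.sqrt_mul (by linarith), mul_assoc]
  have h := supNormInf_rotated_form (by rw [hu, hv]; ring) hvu
  rwa [hu, ← hb] at h
end

section
/- Let p > 2 and let α, β ≥ 0 with α^p + β^p = 1. Then the 2-homogeneous polynomial P(x,y) = ((α^p − β^p)/(α² + β²))(x² − y²) + 2αβ·((α^{p−2} + β^{p−2})/(α² + β²))·xy satisfies sup{|P(x,y)| : |x|^p + |y|^p ≤ 1} = 1, with the supremum attained at (x,y) = (α, β). -/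
/-!
Substituting `α ^ p = α ^ (p - 2) * α ^ 2` and `β ^ p = β ^ (p - 2) * β ^ 2`, the form becomes
`P(x, y) = α ^ (p - 2) x² + β ^ (p - 2) y² - c (α y - β x)²` with `c ≥ 0`. By weighted AM-GM,
`α ^ (p - 2) x² ≤ (p - 2)/p · α ^ p + 2/p · |x| ^ p`, and likewise for `β, y`, so `P ≤ 1` on the
unit ball of `ℓ_p²`, with equality at `(α, β)`. Since `P(y, -x) = -P(x, y)`, also `P ≥ -1`.
-/

open Real

lemma Real.rpow_sub_two_mul_sq {x p : ℝ} (hx : 0 ≤ x) (hp : p ≠ 0) :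
    x ^ (p - 2) * x ^ 2 = x ^ p := by
  rw [← rpow_two, ← rpow_add' hx (by simpa using hp), sub_add_cancel]

lemma Real.rpow_sub_two_mul_sq_le {p a x : ℝ} (hp : 2 ≤ p) (ha : 0 ≤ a) (hx : 0 ≤ x) :
    a ^ (p - 2) * x ^ 2 ≤ (p - 2) / p * a ^ p + 2 / p * x ^ p := by
  have hp0 : p ≠ 0 := by positivity
  have amgm := geom_mean_le_arith_mean2_weighted (w₁ := (p - 2) / p) (w₂ := 2 / p)
    (div_nonneg (by linarith) (by positivity)) (by positivity)
    (rpow_nonneg ha p) (rpow_nonneg hx p) (by field_simp; ring)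
  rwa [← rpow_mul ha, ← rpow_mul hx, mul_div_cancel₀ _ hp0, mul_div_cancel₀ _ hp0,
    rpow_two] at amgm

lemma weighted_sq_add_le_one {p α β x y : ℝ} (hp : 2 ≤ p) (hα : 0 ≤ α) (hβ : 0 ≤ β)
    (h : α ^ p + β ^ p = 1) (hxy : |x| ^ p + |y| ^ p ≤ 1) :
    α ^ (p - 2) * x ^ 2 + β ^ (p - 2) * y ^ 2 ≤ 1 := by
  have hp0 : 0 < p := by linarith
  rw [← sq_abs x, ← sq_abs y]
  calc α ^ (p - 2) * |x| ^ 2 + β ^ (p - 2) * |y| ^ 2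
      ≤ (p - 2) / p * α ^ p + 2 / p * |x| ^ p + ((p - 2) / p * β ^ p + 2 / p * |y| ^ p) :=
        add_le_add (rpow_sub_two_mul_sq_le hp hα (abs_nonneg x))
          (rpow_sub_two_mul_sq_le hp hβ (abs_nonneg y))
    _ = (p - 2) / p * (α ^ p + β ^ p) + 2 / p * (|x| ^ p + |y| ^ p) := by ring
    _ ≤ (p - 2) / p * 1 + 2 / p * 1 := by
        rw [h]; gcongr
    _ = 1 := by field_simp; ring

lemma quadratic_form_eq_sub_sq {u v α β : ℝ} (hS : α ^ 2 + β ^ 2 ≠ 0) (x y : ℝ) :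
    (u * α ^ 2 - v * β ^ 2) / (α ^ 2 + β ^ 2) * x ^ 2
        + 2 * α * β * ((u + v) / (α ^ 2 + β ^ 2)) * x * y
        + -((u * α ^ 2 - v * β ^ 2) / (α ^ 2 + β ^ 2)) * y ^ 2
      = u * x ^ 2 + v * y ^ 2 - (u + v) / (α ^ 2 + β ^ 2) * (α * y - β * x) ^ 2 := by
  field_simp
  ring

theorem stmt19 (p : ℝ) (hp : 2 < p) (α β : ℝ) (hα : 0 ≤ α) (hβ : 0 ≤ β)
    (h : α ^ p + β ^ p = 1) :
    let a : ℝ := (α ^ p - β ^ p) / (α ^ 2 + β ^ 2)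
    let b : ℝ := 2 * α * β * ((α ^ (p - 2) + β ^ (p - 2)) / (α ^ 2 + β ^ 2))
    IsGreatest
      {z : ℝ | ∃ x y : ℝ, |x| ^ p + |y| ^ p ≤ 1 ∧
        z = |a * x ^ 2 + b * x * y + (-a) * y ^ 2|} 1 ∧
    |a * α ^ 2 + b * α * β + (-a) * β ^ 2| = 1 := by
  intro a b
  have hp0 : p ≠ 0 := by positivity
  have hS : α ^ 2 + β ^ 2 ≠ 0 := by
    rintro hS
    obtain ⟨rfl, rfl⟩ : α = 0 ∧ β = 0 := by constructor <;> nlinarith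
    simp [zero_rpow hp0] at h
  set c := (α ^ (p - 2) + β ^ (p - 2)) / (α ^ 2 + β ^ 2)
  have hc : 0 ≤ c := by positivity
  have hform : ∀ x y, a * x ^ 2 + b * x * y + (-a) * y ^ 2
      = α ^ (p - 2) * x ^ 2 + β ^ (p - 2) * y ^ 2 - c * (α * y - β * x) ^ 2 := fun x y => by
    simp only [a, b, c, ← rpow_sub_two_mul_sq hα hp0, ← rpow_sub_two_mul_sq hβ hp0]
    exact quadratic_form_eq_sub_sq hS x y
  have hle : ∀ x y, |x| ^ p + |y| ^ p ≤ 1 → a * x ^ 2 + b * x * y + (-a) * y ^ 2 ≤ 1 :=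
    fun x y hxy => by
      rw [hform]
      linarith [weighted_sq_add_le_one hp.le hα hβ h hxy,
        mul_nonneg hc (sq_nonneg (α * y - β * x))]
  have hval : a * α ^ 2 + b * α * β + (-a) * β ^ 2 = 1 := by
    rw [hform, rpow_sub_two_mul_sq hα hp0, rpow_sub_two_mul_sq hβ hp0, h]
    ring
  refine ⟨⟨⟨α, β, by rw [abs_of_nonneg hα, abs_of_nonneg hβ, h], by rw [hval, abs_one]⟩, ?_⟩,
    by rw [hval, abs_one]⟩
  rintro _ ⟨x, y, hxy, rfl⟩
  have hrot := hle y (-x) (by rwa [abs_neg, add_comm])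
  rw [abs_le]
  constructor <;> linarith [hle x y hxy]
end
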